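/- arXiv:2604.12561 — 3 statements merged into one kernel-verified Lean document; each statement's English description precedes it below -/
import Mathlib

section
/- Let p > 1, let d ≥ 1 be an integer, and let γ ∈ [0, 1/2]. Define k = ⌈2^{dp}⌉ if 0 ≤ γ ≤ 1 − (2^{dp}+1)/2^{dp+1}, and k = ⌊2^{dp}⌋ if 1 − (2^{dp}+1)/2^{dp+1} < γ ≤ 1/2. Then the number α = 1 − (1−γ)·2^{dp}/k satisfies 0 ≤ α ≤ 1/2. -/
open Real
open scoped Classical

/-- Arithmetic core of the parabolic dyadic division: with
`k = ⌈2^{dp}⌉` if `0 ≤ γ ≤ 1 − (2^{dp}+1)/2^{dp+1}` and `k = ⌊2^{dp}⌋`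
otherwise, the child truncation parameter `α = 1 − (1−γ)·2^{dp}/k`
satisfies `0 ≤ α ≤ 1/2`. -/
theorem dyadic_truncation_parameter_bounds (p : ℝ) (hp : 1 < p) (d : ℕ) (hd : 1 ≤ d)
    (γ : ℝ) (hγ0 : 0 ≤ γ) (hγ : γ ≤ 1 / 2) (k : ℕ)
    (hk : k = if γ ≤ 1 - ((2 : ℝ) ^ ((d : ℝ) * p) + 1) / (2 : ℝ) ^ ((d : ℝ) * p + 1) then
        ⌈(2 : ℝ) ^ ((d : ℝ) * p)⌉₊ else ⌊(2 : ℝ) ^ ((d : ℝ) * p)⌋₊)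
    (α : ℝ) (hα : α = 1 - (1 - γ) * (2 : ℝ) ^ ((d : ℝ) * p) / (k : ℝ)) :
    0 ≤ α ∧ α ≤ 1 / 2 := by
  set X : ℝ := (2 : ℝ) ^ ((d : ℝ) * p) with hXdef
  have hd1 : (1 : ℝ) ≤ (d : ℝ) := by exact_mod_cast hd
  have hdp : (1 : ℝ) < (d : ℝ) * p := by nlinarith
  have hX2 : (2 : ℝ) < X := by
    have := Real.rpow_lt_rpow_of_exponent_lt (x := (2:ℝ)) (by norm_num) hdp
    simpa [Real.rpow_one] using this
  have hX0 : (0 : ℝ) < X := by linarith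
  have hXsplit : (2 : ℝ) ^ ((d : ℝ) * p + 1) = 2 * X := by
    rw [Real.rpow_add (by norm_num : (0:ℝ) < 2), Real.rpow_one, hXdef]; ring
  rw [hXsplit] at hk
  by_cases h : γ ≤ 1 - (X + 1) / (2 * X)
  · rw [if_pos h] at hk
    have hkX : X ≤ (k : ℝ) := by rw [hk]; exact Nat.le_ceil X
    have hkX1 : (k : ℝ) < X + 1 := by
      rw [hk]; exact Nat.ceil_lt_add_one hX0.le
    have hk0 : (0 : ℝ) < (k : ℝ) := by linarith
    have hcond : X + 1 ≤ (1 - γ) * (2 * X) := by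
      have h' : (X + 1) / (2 * X) ≤ 1 - γ := by linarith
      have := (div_le_iff₀ (by linarith : (0:ℝ) < 2 * X)).1 h'
      linarith
    constructor
    · rw [hα, sub_nonneg, div_le_one hk0]
      nlinarith
    · rw [hα]
      have : (k : ℝ) / 2 ≤ (1 - γ) * X := by nlinarith
      have h2 : (1 : ℝ) / 2 ≤ (1 - γ) * X / (k : ℝ) := by
        rw [le_div_iff₀ hk0]; nlinarith
      linarith
  · rw [if_neg h] at hk
    push_neg at h
    have hkX : (k : ℝ) ≤ X := by rw [hk]; exact Nat.floor_le hX0.le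
    have hkX1 : X < (k : ℝ) + 1 := by rw [hk]; exact Nat.lt_floor_add_one X
    have hk2 : (2 : ℝ) ≤ (k : ℝ) := by
      rw [hk]
      have : (2 : ℕ) ≤ ⌊X⌋₊ := Nat.le_floor (by exact_mod_cast hX2.le)
      exact_mod_cast this
    have hk0 : (0 : ℝ) < (k : ℝ) := by linarith
    have hcond : (1 - γ) * (2 * X) < X + 1 := by
      have h' : 1 - γ < (X + 1) / (2 * X) := by linarith
      have := (lt_div_iff₀ (by linarith : (0:ℝ) < 2 * X)).1 h'
      linarith
    constructor
    · rw [hα, sub_nonneg, div_le_one hk0]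
      rcases le_or_gt X 3 with hX3 | hX3
      · nlinarith
      · nlinarith
    · rw [hα]
      have h2 : (1 : ℝ) / 2 ≤ (1 - γ) * X / (k : ℝ) := by
        rw [le_div_iff₀ hk0]; nlinarith
      linarith
end

section
/- Let E ⊆ ℝ^{n+1} be a set that is (c,δ,θ)-weakly porous for some c, δ ∈ (0,1) and θ ∈ ℝ. Then the Lebesgue measure of E is zero. -/
open MeasureTheory Real Filter
open scoped ENNReal Classical

noncomputable section

/-- A (truncated) parabolic rectangle in `ℝ^n × ℝ`, given by spatial center
`x`, top time `t`, side length `L` and truncation parameter `γ`; its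
underlying set is `Q(x,L) × [t − L^p, t − γL^p)`. -/
structure PRect (n : ℕ) where
  x : Fin n → ℝ
  t : ℝ
  L : ℝ
  γ : ℝ

namespace PRect

variable {n : ℕ}

/-- The underlying set of a parabolic rectangle. -/
def toSet (p : ℝ) (R : PRect n) : Set ((Fin n → ℝ) × ℝ) :=
  {z | (∀ i, R.x i - R.L / 2 ≤ z.1 i ∧ z.1 i < R.x i + R.L / 2) ∧
    R.t - R.L ^ p ≤ z.2 ∧ z.2 < R.t - R.γ * R.L ^ p}

/-- The temporal translate `R^θ = R + (0, θ·l_t(R))`. -/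
def translate (p θ : ℝ) (R : PRect n) : PRect n :=
  ⟨R.x, R.t + θ * ((1 - R.γ) * R.L ^ p), R.L, R.γ⟩

/-- The number of temporal divisions in one dyadic step. -/
def childK (p : ℝ) (d : ℕ) (γ : ℝ) : ℕ :=
  if γ ≤ 1 - ((2 : ℝ) ^ ((d : ℝ) * p) + 1) / (2 : ℝ) ^ ((d : ℝ) * p + 1) then
    ⌈(2 : ℝ) ^ ((d : ℝ) * p)⌉₊
  else
    ⌊(2 : ℝ) ^ ((d : ℝ) * p)⌋₊

/-- `P` is a first-order dyadic child of `R` (spatial edges divided into `2^d`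
parts, temporal edges into `childK p d R.γ` parts). -/
def IsChild (p : ℝ) (d : ℕ) (R P : PRect n) : Prop :=
  ∃ (v : Fin n → ℕ) (j : ℕ),
    (∀ i, v i < 2 ^ d) ∧ j < childK p d R.γ ∧
    P.L = R.L / 2 ^ d ∧
    (∀ i, P.x i = R.x i - R.L / 2 + ((v i : ℝ) + 1 / 2) * (R.L / 2 ^ d)) ∧
    P.t = R.t - R.L ^ p + (j : ℝ) * ((1 - R.γ) * R.L ^ p / childK p d R.γ) + P.L ^ p ∧
    P.γ = 1 - ((1 - R.γ) * R.L ^ p / childK p d R.γ) / P.L ^ p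

/-- `P` belongs to the dyadic lattice `D(R)` of the rectangle `R`. -/
inductive IsDyadic (p : ℝ) (d : ℕ) (R : PRect n) : PRect n → Prop
  | refl : IsDyadic p d R R
  | step {Q S : PRect n} : IsDyadic p d R Q → IsChild p d Q S → IsDyadic p d R S

/-- The measure of the largest `E`-free dyadic subrectangle `M(R)` of `R`
(zero if there is none). -/
def maxHole (p : ℝ) (d : ℕ) (E : Set ((Fin n → ℝ) × ℝ)) (R : PRect n) : ℝ≥0∞ :=
  ⨆ (P : PRect n) (_ : IsDyadic p d R P ∧ P.toSet p ∩ E = ∅), volume (P.toSet p)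

end PRect
namespace PRect
variable {n : ℕ}

lemma toSet_eq (p : ℝ) (R : PRect n) :
    R.toSet p = (Set.univ.pi fun i => Set.Ico (R.x i - R.L/2) (R.x i + R.L/2)) ×ˢ
      Set.Ico (R.t - R.L ^ p) (R.t - R.γ * R.L ^ p) := by
  ext z
  simp [toSet, Set.mem_pi, Set.mem_Ico, and_assoc]

lemma measurableSet_toSet (p : ℝ) (R : PRect n) : MeasurableSet (R.toSet p) := by
  rw [toSet_eq]
  exact (MeasurableSet.univ_pi fun i => measurableSet_Ico).prod measurableSet_Ico

lemma volume_toSet (p : ℝ) (R : PRect n) :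
    volume (R.toSet p) = ENNReal.ofReal R.L ^ n * ENNReal.ofReal ((1 - R.γ) * R.L ^ p) := by
  rw [toSet_eq, MeasureTheory.Measure.volume_eq_prod, MeasureTheory.Measure.prod_prod,
    volume_pi_pi]
  simp only [Real.volume_Ico]
  congr 1
  · rw [show (fun x : Fin n => ENNReal.ofReal (R.x x + R.L / 2 - (R.x x - R.L / 2))) = fun _ => ENNReal.ofReal R.L by funext i; congr 1; ring]
    simp
  · congr 1
    ring

end PRect
namespace PRect
variable {n : ℕ}

lemma one_lt_dp {p : ℝ} {d : ℕ} (hp : 1 < p) (hd : 1 ≤ d) : 1 < (d : ℝ) * p := by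
  have : (1:ℝ) ≤ d := by exact_mod_cast hd
  nlinarith

lemma two_lt_A {p : ℝ} {d : ℕ} (hp : 1 < p) (hd : 1 ≤ d) :
    2 < (2:ℝ) ^ ((d : ℝ) * p) := by
  have h := Real.rpow_lt_rpow_of_exponent_lt (by norm_num : (1:ℝ) < 2) (one_lt_dp hp hd)
  rwa [Real.rpow_one] at h

lemma childK_bounds {p : ℝ} {d : ℕ} (hp : 1 < p) (hd : 1 ≤ d) {γ : ℝ}
    (h0 : 0 ≤ γ) (h1 : γ ≤ 1/2) :
    (1 - γ) * (2:ℝ) ^ ((d : ℝ) * p) ≤ childK p d γ ∧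
      (childK p d γ : ℝ) ≤ 2 * ((1 - γ) * (2:ℝ) ^ ((d : ℝ) * p)) := by
  set A : ℝ := (2:ℝ) ^ ((d : ℝ) * p) with hA
  have hA2 : 2 < A := two_lt_A hp hd
  have hApos : 0 < A := by linarith
  have h2A : (2:ℝ) ^ ((d : ℝ) * p + 1) = A * 2 := by
    rw [Real.rpow_add (by norm_num : (0:ℝ) < 2), Real.rpow_one]
  unfold childK
  rw [← hA, h2A]
  split_ifs with hbr
  · -- K = ⌈A⌉₊
    have hceil : A ≤ (⌈A⌉₊ : ℝ) := Nat.le_ceil A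
    have hceil2 : (⌈A⌉₊ : ℝ) < A + 1 := Nat.ceil_lt_add_one (le_of_lt hApos)
    have hbr' : (A + 1) / (A * 2) ≤ 1 - γ := by linarith
    have hbr'' : A + 1 ≤ (1 - γ) * (A * 2) := by
      rw [div_le_iff₀ (by positivity)] at hbr'
      linarith
    constructor
    · nlinarith
    · nlinarith
  · -- K = ⌊A⌋₊
    have hfl : (⌊A⌋₊ : ℝ) ≤ A := Nat.floor_le (le_of_lt hApos)
    have hfl2 : A < (⌊A⌋₊ : ℝ) + 1 := Nat.lt_floor_add_one A
    have hfl3 : (2 : ℝ) ≤ (⌊A⌋₊ : ℝ) := by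
      have : (2 : ℕ) ≤ ⌊A⌋₊ := Nat.le_floor (by exact_mod_cast hA2.le)
      exact_mod_cast this
    push_neg at hbr
    have hbr' : 1 - γ < (A + 1) / (A * 2) := by linarith
    have hbr'' : (1 - γ) * (A * 2) < A + 1 := by
      rw [lt_div_iff₀ (by positivity)] at hbr'
      linarith
    constructor
    · nlinarith
    · nlinarith

lemma childK_pos {p : ℝ} {d : ℕ} (hp : 1 < p) (hd : 1 ≤ d) {γ : ℝ}
    (h0 : 0 ≤ γ) (h1 : γ ≤ 1/2) : 0 < childK p d γ := by
  have h := (childK_bounds hp hd h0 h1).1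
  have hA2 : 2 < (2:ℝ) ^ ((d : ℝ) * p) := two_lt_A hp hd
  have : (0:ℝ) < childK p d γ := by nlinarith
  exact_mod_cast this

end PRect
namespace PRect
variable {n : ℕ}

/-- The explicit child rectangle. -/
def childF (p : ℝ) (d : ℕ) (R : PRect n) (v : Fin n → ℕ) (j : ℕ) : PRect n where
  x := fun i => R.x i - R.L / 2 + ((v i : ℝ) + 1 / 2) * (R.L / 2 ^ d)
  t := R.t - R.L ^ p + (j : ℝ) * ((1 - R.γ) * R.L ^ p / childK p d R.γ) + (R.L / 2 ^ d) ^ p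
  L := R.L / 2 ^ d
  γ := 1 - ((1 - R.γ) * R.L ^ p / childK p d R.γ) / (R.L / 2 ^ d) ^ p

lemma ext' {R S : PRect n} (hx : R.x = S.x) (ht : R.t = S.t) (hL : R.L = S.L)
    (hγ : R.γ = S.γ) : R = S := by
  cases R; cases S; simp_all

lemma isChild_iff {p : ℝ} {d : ℕ} {R P : PRect n} :
    IsChild p d R P ↔ ∃ (v : Fin n → ℕ) (j : ℕ),
      (∀ i, v i < 2 ^ d) ∧ j < childK p d R.γ ∧ P = childF p d R v j := by
  constructor
  · rintro ⟨v, j, hv, hj, hL, hx, ht, hγ⟩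
    refine ⟨v, j, hv, hj, ext' (funext hx) ?_ hL ?_⟩
    · rw [ht, hL]; rfl
    · rw [hγ, hL]; rfl
  · rintro ⟨v, j, hv, hj, rfl⟩
    exact ⟨v, j, hv, hj, rfl, fun i => rfl, rfl, rfl⟩

/-- Admissible rectangles. -/
def Adm (R : PRect n) : Prop := 0 < R.L ∧ 0 ≤ R.γ ∧ R.γ ≤ 1/2

lemma childF_toSet {p : ℝ} {d : ℕ} {R : PRect n} (hL : 0 < R.L)
    (v : Fin n → ℕ) (j : ℕ) :
    (childF p d R v j).toSet p =
      (Set.univ.pi fun i => Set.Ico (R.x i - R.L/2 + (v i : ℝ) * (R.L / 2 ^ d))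
        (R.x i - R.L/2 + ((v i : ℝ) + 1) * (R.L / 2 ^ d))) ×ˢ
      Set.Ico (R.t - R.L ^ p + (j : ℝ) * ((1 - R.γ) * R.L ^ p / childK p d R.γ))
        (R.t - R.L ^ p + ((j : ℝ) + 1) * ((1 - R.γ) * R.L ^ p / childK p d R.γ)) := by
  have hB : (0:ℝ) < (R.L / 2 ^ d) ^ p := Real.rpow_pos_of_pos (by positivity) p
  have h1 : ∀ i, (childF p d R v j).x i - (childF p d R v j).L / 2
      = R.x i - R.L/2 + (v i : ℝ) * (R.L / 2 ^ d) := by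
    intro i; simp only [childF]; ring
  have h2 : ∀ i, (childF p d R v j).x i + (childF p d R v j).L / 2
      = R.x i - R.L/2 + ((v i : ℝ) + 1) * (R.L / 2 ^ d) := by
    intro i; simp only [childF]; ring
  have h3 : (childF p d R v j).t - (childF p d R v j).L ^ p
      = R.t - R.L ^ p + (j : ℝ) * ((1 - R.γ) * R.L ^ p / childK p d R.γ) := by
    simp only [childF]; ring
  have h4 : (childF p d R v j).t - (childF p d R v j).γ * (childF p d R v j).L ^ p
      = R.t - R.L ^ p + ((j : ℝ) + 1) * ((1 - R.γ) * R.L ^ p / childK p d R.γ) := by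
    have key : (1 - ((1 - R.γ) * R.L ^ p / childK p d R.γ) / (R.L / 2 ^ d) ^ p)
        * (R.L / 2 ^ d) ^ p
        = (R.L / 2 ^ d) ^ p - (1 - R.γ) * R.L ^ p / childK p d R.γ := by
      rw [sub_mul, one_mul, div_mul_cancel₀ _ hB.ne']
    simp only [childF]
    rw [key]
    ring
  rw [toSet_eq, h3, h4, show (fun i => Set.Ico ((childF p d R v j).x i - (childF p d R v j).L / 2)
      ((childF p d R v j).x i + (childF p d R v j).L / 2))
    = fun i => Set.Ico (R.x i - R.L/2 + (v i : ℝ) * (R.L / 2 ^ d))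
      (R.x i - R.L/2 + ((v i : ℝ) + 1) * (R.L / 2 ^ d)) from funext fun i => by rw [h1 i, h2 i]]
end PRect
namespace PRect
variable {n : ℕ}

lemma rpow_frac {L : ℝ} (hL : 0 < L) (d : ℕ) (p : ℝ) :
    (L / 2 ^ d) ^ p = L ^ p / (2:ℝ) ^ ((d:ℝ) * p) := by
  rw [Real.div_rpow hL.le (by positivity), ← Real.rpow_natCast (2:ℝ) d,
    ← Real.rpow_mul (by norm_num)]

lemma adm_childF {p : ℝ} {d : ℕ} (hp : 1 < p) (hd : 1 ≤ d) {R : PRect n}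
    (hR : Adm R) (v : Fin n → ℕ) (j : ℕ) : Adm (childF p d R v j) := by
  obtain ⟨hL, hγ0, hγ1⟩ := hR
  have hA2 : 2 < (2:ℝ) ^ ((d:ℝ) * p) := two_lt_A hp hd
  have hKb := childK_bounds hp hd hγ0 hγ1
  have hK0 : (0:ℝ) < childK p d R.γ := by exact_mod_cast childK_pos hp hd hγ0 hγ1
  have hLp : (0:ℝ) < R.L ^ p := Real.rpow_pos_of_pos hL p
  have hγ' : (childF p d R v j).γ = 1 - (1 - R.γ) * (2:ℝ) ^ ((d:ℝ)*p) / childK p d R.γ := by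
    show 1 - _ = _
    rw [rpow_frac hL]
    congr 1
    field_simp
  refine ⟨by show (0:ℝ) < R.L / 2^d; positivity, ?_, ?_⟩
  · rw [hγ']
    have : (1 - R.γ) * (2:ℝ) ^ ((d:ℝ)*p) / childK p d R.γ ≤ 1 := by
      rw [div_le_one hK0]; exact hKb.1
    linarith
  · rw [hγ']
    have : (1:ℝ)/2 ≤ (1 - R.γ) * (2:ℝ) ^ ((d:ℝ)*p) / childK p d R.γ := by
      rw [le_div_iff₀ hK0]; nlinarith [hKb.2]
    linarith

lemma childF_subset {p : ℝ} {d : ℕ} {R : PRect n} (hL : 0 < R.L) (hγ1 : R.γ ≤ 1)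
    {v : Fin n → ℕ} {j : ℕ} (hv : ∀ i, v i < 2 ^ d) (hj : j < childK p d R.γ) :
    (childF p d R v j).toSet p ⊆ R.toSet p := by
  have hs : (0:ℝ) < R.L / 2 ^ d := by positivity
  have hLp : (0:ℝ) < R.L ^ p := Real.rpow_pos_of_pos hL p
  have hK0 : (0:ℝ) < childK p d R.γ := by exact_mod_cast lt_of_le_of_lt (Nat.zero_le j) hj
  have hΔ0 : (0:ℝ) ≤ (1 - R.γ) * R.L ^ p / childK p d R.γ := by
    apply div_nonneg _ hK0.le
    nlinarith
  have hKΔ : (childK p d R.γ : ℝ) * ((1 - R.γ) * R.L ^ p / childK p d R.γ)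
      = (1 - R.γ) * R.L ^ p := mul_div_cancel₀ _ hK0.ne'
  rw [childF_toSet hL, toSet_eq]
  rintro ⟨z1, z2⟩ ⟨hz1, hz2⟩
  simp only [Set.mem_prod, Set.mem_pi, Set.mem_univ, Set.mem_Ico, forall_true_left] at *
  refine ⟨fun i => ⟨?_, ?_⟩, ?_, ?_⟩
  · have := (hz1 i).1
    nlinarith [hs.le, (Nat.cast_nonneg (v i) : (0:ℝ) ≤ v i)]
  · have h2 := (hz1 i).2
    have hvle : ((v i : ℝ) + 1) ≤ (2:ℝ) ^ d := by
      have : v i + 1 ≤ 2 ^ d := hv i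
      exact_mod_cast this
    have h2d : ((2:ℝ) ^ d) * (R.L / 2 ^ d) = R.L := by field_simp
    nlinarith [mul_le_mul_of_nonneg_right hvle hs.le]
  · have := hz2.1
    nlinarith [mul_nonneg (Nat.cast_nonneg j : (0:ℝ) ≤ j) hΔ0]
  · have h2 := hz2.2
    have hjle : ((j : ℝ) + 1) ≤ (childK p d R.γ : ℝ) := by exact_mod_cast hj
    have := mul_le_mul_of_nonneg_right hjle hΔ0
    nlinarith

lemma floor_mem {a s y : ℝ} (hs : 0 < s) (h1 : a ≤ y) :
    a + (⌊(y-a)/s⌋₊ : ℝ) * s ≤ y ∧ y < a + ((⌊(y-a)/s⌋₊ : ℝ) + 1) * s := by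
  have hu : 0 ≤ (y - a) / s := div_nonneg (by linarith) hs.le
  constructor
  · have hf := mul_le_mul_of_nonneg_right (Nat.floor_le hu) hs.le
    rw [div_mul_cancel₀ _ hs.ne'] at hf
    linarith
  · have hf := mul_lt_mul_of_pos_right (Nat.lt_floor_add_one ((y - a) / s)) hs
    rw [div_mul_cancel₀ _ hs.ne'] at hf
    linarith

lemma floor_lt {a s y : ℝ} (hs : 0 < s) (h1 : a ≤ y) {m : ℕ} (h2 : y < a + m * s) :
    ⌊(y-a)/s⌋₊ < m := by
  have hu : 0 ≤ (y - a) / s := div_nonneg (by linarith) hs.le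
  rw [Nat.floor_lt hu, div_lt_iff₀ hs]
  linarith

lemma exists_child_mem {p : ℝ} {d : ℕ} (hp : 1 < p) (hd : 1 ≤ d) {R : PRect n}
    (hR : Adm R) {z : (Fin n → ℝ) × ℝ} (hz : z ∈ R.toSet p) :
    ∃ (v : Fin n → ℕ) (j : ℕ), (∀ i, v i < 2 ^ d) ∧ j < childK p d R.γ ∧
      z ∈ (childF p d R v j).toSet p := by
  obtain ⟨hL, hγ0, hγ1⟩ := hR
  have hs : (0:ℝ) < R.L / 2 ^ d := by positivity
  have hLp : (0:ℝ) < R.L ^ p := Real.rpow_pos_of_pos hL p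
  have hK0 : (0:ℝ) < childK p d R.γ := by exact_mod_cast childK_pos hp hd hγ0 hγ1
  set Δ : ℝ := (1 - R.γ) * R.L ^ p / childK p d R.γ with hΔdef
  have hΔ : 0 < Δ := by
    apply div_pos _ hK0
    nlinarith
  have hKΔ : (childK p d R.γ : ℝ) * Δ = (1 - R.γ) * R.L ^ p := mul_div_cancel₀ _ hK0.ne'
  obtain ⟨hz1, hz2a, hz2b⟩ := hz
  refine ⟨fun i => ⌊(z.1 i - (R.x i - R.L/2)) / (R.L / 2^d)⌋₊,
    ⌊(z.2 - (R.t - R.L^p)) / Δ⌋₊, fun i => ?_, ?_, ?_⟩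
  · refine floor_lt hs (hz1 i).1 ?_
    have h2d : ((2:ℝ) ^ d) * (R.L / 2 ^ d) = R.L := by field_simp
    push_cast
    nlinarith [(hz1 i).2]
  · refine floor_lt hΔ hz2a ?_
    nlinarith
  · rw [childF_toSet hL]
    refine ⟨fun i _ => ?_, ?_⟩
    · exact (floor_mem hs (hz1 i).1 : _)
    · exact (floor_mem hΔ hz2a : _)

lemma step_eq {a s : ℝ} (hs : 0 < s) {k l : ℕ} {y : ℝ} (h1 : a + k * s ≤ y)
    (h2 : y < a + ((k:ℝ) + 1) * s) (h3 : a + l * s ≤ y)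
    (h4 : y < a + ((l:ℝ) + 1) * s) : k = l := by
  have hkl : (k:ℝ) < (l:ℝ) + 1 := by nlinarith
  have hlk : (l:ℝ) < (k:ℝ) + 1 := by nlinarith
  have h5 : k < l + 1 := by exact_mod_cast hkl
  have h6 : l < k + 1 := by exact_mod_cast hlk
  omega

lemma childF_point_inj {p : ℝ} {d : ℕ} (hp : 1 < p) (hd : 1 ≤ d) {R : PRect n}
    (hR : Adm R) {v v' : Fin n → ℕ} {j j' : ℕ} {z : (Fin n → ℝ) × ℝ}
    (h : z ∈ (childF p d R v j).toSet p) (h' : z ∈ (childF p d R v' j').toSet p) :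
    v = v' ∧ j = j' := by
  obtain ⟨hL, hγ0, hγ1⟩ := hR
  have hs : (0:ℝ) < R.L / 2 ^ d := by positivity
  have hLp : (0:ℝ) < R.L ^ p := Real.rpow_pos_of_pos hL p
  have hK0 : (0:ℝ) < childK p d R.γ := by exact_mod_cast childK_pos hp hd hγ0 hγ1
  have hΔ : 0 < (1 - R.γ) * R.L ^ p / childK p d R.γ := by
    apply div_pos _ hK0; nlinarith
  rw [childF_toSet hL] at h h'
  obtain ⟨h1, h2⟩ := h
  obtain ⟨h1', h2'⟩ := h'
  constructor
  · funext i
    exact step_eq hs (h1 i trivial).1 (h1 i trivial).2 (h1' i trivial).1 (h1' i trivial).2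
  · exact step_eq hΔ h2.1 h2.2 h2'.1 h2'.2

end PRect
namespace PRect
variable {n : ℕ}

local instance : DecidableEq (PRect n) := Classical.decEq _

/-- Level-`m` dyadic pieces of `R`. -/
def pieces (p : ℝ) (d : ℕ) : ℕ → PRect n → Finset (PRect n)
  | 0, R => {R}
  | (m+1), R => (pieces p d m R).biUnion fun Q =>
      Finset.image (fun vj : (Fin n → Fin (2 ^ d)) × Fin (childK p d Q.γ) =>
        childF p d Q (fun i => (vj.1 i : ℕ)) (vj.2 : ℕ)) Finset.univ

lemma mem_pieces_succ {p : ℝ} {d : ℕ} {R S : PRect n} {m : ℕ} :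
    S ∈ pieces p d (m+1) R ↔ ∃ Q ∈ pieces p d m R, ∃ (v : Fin n → ℕ) (j : ℕ),
      (∀ i, v i < 2 ^ d) ∧ j < childK p d Q.γ ∧ S = childF p d Q v j := by
  simp only [pieces, Finset.mem_biUnion, Finset.mem_image, Finset.mem_univ, true_and]
  constructor
  · rintro ⟨Q, hQ, vj, rfl⟩
    exact ⟨Q, hQ, fun i => vj.1 i, vj.2, fun i => (vj.1 i).2, (vj.2).2, rfl⟩
  · rintro ⟨Q, hQ, v, j, hv, hj, rfl⟩
    exact ⟨Q, hQ, ⟨fun i => ⟨v i, hv i⟩, ⟨j, hj⟩⟩, rfl⟩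

lemma pieces_adm {p : ℝ} {d : ℕ} (hp : 1 < p) (hd : 1 ≤ d) :
    ∀ (m : ℕ) (R : PRect n), Adm R → ∀ Q ∈ pieces p d m R, Adm Q := by
  intro m
  induction m with
  | zero => intro R hR Q hQ; simp only [pieces, Finset.mem_singleton] at hQ; rwa [hQ]
  | succ m ih =>
    intro R hR Q hQ
    obtain ⟨Q', hQ', v, j, hv, hj, rfl⟩ := mem_pieces_succ.mp hQ
    exact adm_childF hp hd (ih R hR Q' hQ') v j

lemma pieces_subset {p : ℝ} {d : ℕ} (hp : 1 < p) (hd : 1 ≤ d) :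
    ∀ (m : ℕ) (R : PRect n), Adm R → ∀ Q ∈ pieces p d m R, Q.toSet p ⊆ R.toSet p := by
  intro m
  induction m with
  | zero => intro R hR Q hQ; simp only [pieces, Finset.mem_singleton] at hQ; rw [hQ]
  | succ m ih =>
    intro R hR Q hQ
    obtain ⟨Q', hQ', v, j, hv, hj, rfl⟩ := mem_pieces_succ.mp hQ
    have hQ'a := pieces_adm hp hd m R hR Q' hQ'
    exact (childF_subset hQ'a.1 (by linarith [hQ'a.2.2]) hv hj).trans (ih R hR Q' hQ')

lemma pieces_cover {p : ℝ} {d : ℕ} (hp : 1 < p) (hd : 1 ≤ d) :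
    ∀ (m : ℕ) (R : PRect n), Adm R → ∀ z ∈ R.toSet p,
      ∃ Q ∈ pieces p d m R, z ∈ Q.toSet p := by
  intro m
  induction m with
  | zero => intro R hR z hz; exact ⟨R, by simp [pieces], hz⟩
  | succ m ih =>
    intro R hR z hz
    obtain ⟨Q, hQ, hzQ⟩ := ih R hR z hz
    obtain ⟨v, j, hv, hj, hmem⟩ := exists_child_mem hp hd (pieces_adm hp hd m R hR Q hQ) hzQ
    exact ⟨childF p d Q v j, mem_pieces_succ.mpr ⟨Q, hQ, v, j, hv, hj, rfl⟩, hmem⟩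

lemma pieces_disjoint {p : ℝ} {d : ℕ} (hp : 1 < p) (hd : 1 ≤ d) :
    ∀ (m : ℕ) (R : PRect n), Adm R → ∀ Q ∈ pieces p d m R, ∀ Q' ∈ pieces p d m R,
      Q ≠ Q' → Q.toSet p ∩ Q'.toSet p = ∅ := by
  intro m
  induction m with
  | zero =>
    intro R hR Q hQ Q' hQ' hne
    simp only [pieces, Finset.mem_singleton] at hQ hQ'
    exact absurd (hQ.trans hQ'.symm) hne
  | succ m ih =>
    intro R hR Q hQ Q' hQ' hne
    obtain ⟨Q1, hQ1, v, j, hv, hj, rfl⟩ := mem_pieces_succ.mp hQ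
    obtain ⟨Q2, hQ2, v', j', hv', hj', rfl⟩ := mem_pieces_succ.mp hQ'
    by_contra hcon
    obtain ⟨z, hz1, hz2⟩ := Set.nonempty_iff_ne_empty.mpr hcon
    by_cases h12 : Q1 = Q2
    · subst h12
      obtain ⟨rfl, rfl⟩ := childF_point_inj hp hd (pieces_adm hp hd m R hR Q1 hQ1) hz1 hz2
      exact hne rfl
    · have ha1 := pieces_adm hp hd m R hR Q1 hQ1
      have ha2 := pieces_adm hp hd m R hR Q2 hQ2
      have hz1' : z ∈ Q1.toSet p := childF_subset ha1.1 (by linarith [ha1.2.2]) hv hj hz1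
      have hz2' : z ∈ Q2.toSet p := childF_subset ha2.1 (by linarith [ha2.2.2]) hv' hj' hz2
      have := ih R hR Q1 hQ1 Q2 hQ2 h12
      exact absurd (Set.mem_inter hz1' hz2' : z ∈ Q1.toSet p ∩ Q2.toSet p) (by rw [this]; exact Set.notMem_empty z)

lemma pieces_add {p : ℝ} {d : ℕ} (a : ℕ) :
    ∀ (b : ℕ) (R : PRect n), pieces p d (a + b) R
      = (pieces p d a R).biUnion fun Q => pieces p d b Q := by
  intro b
  induction b with
  | zero =>
    intro R
    ext S
    simp [pieces]
  | succ b ih =>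
    intro R
    show pieces p d ((a + b) + 1) R = _
    ext S
    rw [mem_pieces_succ, Finset.mem_biUnion]
    constructor
    · rintro ⟨Q, hQ, v, j, hv, hj, rfl⟩
      rw [ih R, Finset.mem_biUnion] at hQ
      obtain ⟨Q0, hQ0, hQ⟩ := hQ
      exact ⟨Q0, hQ0, mem_pieces_succ.mpr ⟨Q, hQ, v, j, hv, hj, rfl⟩⟩
    · rintro ⟨Q0, hQ0, hS⟩
      obtain ⟨Q, hQ, v, j, hv, hj, rfl⟩ := mem_pieces_succ.mp hS
      refine ⟨Q, ?_, v, j, hv, hj, rfl⟩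
      rw [ih R, Finset.mem_biUnion]
      exact ⟨Q0, hQ0, hQ⟩

lemma volume_pieces {p : ℝ} {d : ℕ} (hp : 1 < p) (hd : 1 ≤ d) (m : ℕ)
    (R : PRect n) (hR : Adm R) :
    ∑ Q ∈ pieces p d m R, volume (Q.toSet p) = volume (R.toSet p) := by
  rw [← measure_biUnion_finset ?_ (fun Q _ => measurableSet_toSet p Q)]
  · congr 1
    apply Set.Subset.antisymm
    · exact Set.iUnion₂_subset fun Q hQ => pieces_subset hp hd m R hR Q hQ
    · intro z hz
      obtain ⟨Q, hQ, hzQ⟩ := pieces_cover hp hd m R hR z hz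
      exact Set.mem_biUnion hQ hzQ
  · intro Q hQ Q' hQ' hne
    rw [Function.onFun, Set.disjoint_iff_inter_eq_empty]
    exact pieces_disjoint hp hd m R hR Q hQ Q' hQ' hne

lemma isDyadic_mem_pieces {p : ℝ} {d : ℕ} {R P : PRect n} (h : IsDyadic p d R P) :
    ∃ m, P ∈ pieces p d m R := by
  induction h with
  | refl => exact ⟨0, by simp [pieces]⟩
  | step hQ hc ih =>
    obtain ⟨m, hm⟩ := ih
    obtain ⟨v, j, hv, hj, rfl⟩ := isChild_iff.mp hc
    exact ⟨m + 1, mem_pieces_succ.mpr ⟨_, hm, v, j, hv, hj, rfl⟩⟩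

lemma volume_toSet_pos {p : ℝ} {R : PRect n} (hR : Adm R) : 0 < volume (R.toSet p) := by
  rw [volume_toSet]
  apply ENNReal.mul_pos
  · simp only [ne_eq, pow_eq_zero_iff', ENNReal.ofReal_eq_zero, not_and, not_le]
    intro h
    linarith [hR.1]
  · simp only [ne_eq, ENNReal.ofReal_eq_zero, not_le]
    have := Real.rpow_pos_of_pos hR.1 p
    nlinarith [hR.2.2]

lemma volume_toSet_ne_top {p : ℝ} {R : PRect n} : volume (R.toSet p) ≠ ⊤ := by
  rw [volume_toSet]
  exact ENNReal.mul_ne_top (by simp [ENNReal.pow_ne_top, ENNReal.ofReal_ne_top]) ENNReal.ofReal_ne_top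

end PRect

/-- `E ⊆ ℝ^{n+1}` is `(c,δ,θ)`-weakly porous: every parabolic rectangle
`R(γ₀)` with `γ₀ ∈ [0,1/2]` contains pairwise disjoint `E`-free dyadic
subrectangles, each of measure at least `δ·|M(R^θ(γ₀))|`, of total measure at
least `c·|R(γ₀)|`. -/
def WeaklyPorous (n : ℕ) (p : ℝ) (d : ℕ) (E : Set ((Fin n → ℝ) × ℝ))
    (c δ θ : ℝ) : Prop :=
  ∀ R : PRect n, 0 < R.L → 0 ≤ R.γ → R.γ ≤ 1 / 2 →
    ∃ (N : ℕ) (P : Fin N → PRect n),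
      (∀ k, PRect.IsDyadic p d R (P k)) ∧
      (∀ k, (P k).toSet p ∩ E = ∅) ∧
      (∀ k l, k ≠ l → (P k).toSet p ∩ (P l).toSet p = ∅) ∧
      (∀ k, ENNReal.ofReal δ * PRect.maxHole p d E (R.translate p θ) ≤
        volume ((P k).toSet p)) ∧
      ENNReal.ofReal c * volume (R.toSet p) ≤ ∑ k, volume ((P k).toSet p)


open PRect in
lemma key_contraction {n : ℕ} {p : ℝ} (hp : 1 < p) {d : ℕ} (hd : 1 ≤ d)
    {E : Set ((Fin n → ℝ) × ℝ)} {c δ θ : ℝ} (hc0 : 0 < c) (hc1 : c < 1)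
    (hwp : WeaklyPorous n p d E c δ θ) :
    ∀ (m : ℕ) (R : PRect n), Adm R →
      volume (E ∩ R.toSet p) ≤ ENNReal.ofReal (1 - c) ^ m * volume (R.toSet p) := by
  classical
  intro m
  induction m with
  | zero =>
    intro R hR
    simpa using measure_mono (Set.inter_subset_right : E ∩ R.toSet p ⊆ R.toSet p)
  | succ m ih =>
    intro R hR
    obtain ⟨N, P, hdy, hfree, hdisj, -, htot⟩ := hwp R hR.1 hR.2.1 hR.2.2
    have hmfex : ∀ k, ∃ mk, P k ∈ pieces p d mk R := fun k => isDyadic_mem_pieces (hdy k)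
    set mf : Fin N → ℕ := fun k => (hmfex k).choose with hmf_def
    have hmf : ∀ k, P k ∈ pieces p d (mf k) R := fun k => (hmfex k).choose_spec
    set M := Finset.univ.sup mf with hM
    have hmfM : ∀ k, mf k ≤ M := fun k => Finset.le_sup (Finset.mem_univ k)
    set G := (pieces p d M R).filter
      (fun Q => ∃ k, Q ∈ pieces p d (M - mf k) (P k)) with hGdef
    have hPadm : ∀ k, Adm (P k) := fun k => pieces_adm hp hd _ R hR _ (hmf k)
    have hSk : ∀ k, pieces p d (M - mf k) (P k) ⊆ G := by
      intro k Q hQ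
      refine Finset.mem_filter.mpr ⟨?_, k, hQ⟩
      have hMe : pieces p d M R = (pieces p d (mf k) R).biUnion
          (fun Q' => pieces p d (M - mf k) Q') := by
        rw [← pieces_add]
        congr 1
        have := hmfM k
        omega
      rw [hMe, Finset.mem_biUnion]
      exact ⟨P k, hmf k, hQ⟩
    have h1 : volume (E ∩ R.toSet p) ≤ ∑ Q ∈ pieces p d M R, volume (E ∩ Q.toSet p) := by
      have hsub : E ∩ R.toSet p ⊆ ⋃ Q ∈ pieces p d M R, E ∩ Q.toSet p := by
        rintro z ⟨hzE, hzR⟩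
        obtain ⟨Q, hQ, hzQ⟩ := pieces_cover hp hd M R hR z hzR
        exact Set.mem_biUnion hQ ⟨hzE, hzQ⟩
      exact (measure_mono hsub).trans (measure_biUnion_finset_le _ _)
    have hGzero : ∀ Q ∈ G, volume (E ∩ Q.toSet p) = 0 := by
      intro Q hQ
      obtain ⟨hQM, k, hQk⟩ := Finset.mem_filter.mp hQ
      have hsub : Q.toSet p ⊆ (P k).toSet p :=
        pieces_subset hp hd _ (P k) (hPadm k) Q hQk
      have hempty : E ∩ Q.toSet p = ∅ := by
        apply Set.eq_empty_of_subset_empty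
        intro z hz
        rw [← hfree k]
        exact ⟨hsub hz.2, hz.1⟩
      rw [hempty, measure_empty]
    have hsd := Finset.sum_sdiff (f := fun Q => volume (E ∩ Q.toSet p))
      (Finset.filter_subset (fun Q => ∃ k, Q ∈ pieces p d (M - mf k) (P k)) (pieces p d M R))
    rw [Finset.sum_eq_zero hGzero, add_zero] at hsd
    -- volume of good pieces is large
    have hGlarge : ENNReal.ofReal c * volume (R.toSet p) ≤ ∑ Q ∈ G, volume (Q.toSet p) := by
      have hdisjS : Set.PairwiseDisjoint (↑(Finset.univ : Finset (Fin N)))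
          (fun k => pieces p d (M - mf k) (P k)) := by
        intro k _ l _ hkl
        simp only [Function.onFun]
        rw [Finset.disjoint_left]
        intro Q hQk hQl
        have hsubk : Q.toSet p ⊆ (P k).toSet p :=
          pieces_subset hp hd _ (P k) (hPadm k) Q hQk
        have hsubl : Q.toSet p ⊆ (P l).toSet p :=
          pieces_subset hp hd _ (P l) (hPadm l) Q hQl
        have hQadm : Adm Q := pieces_adm hp hd _ (P k) (hPadm k) Q hQk
        have h0 : Q.toSet p = ∅ := by
          apply Set.eq_empty_of_subset_empty
          intro z hz
          rw [← hdisj k l hkl]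
          exact ⟨hsubk hz, hsubl hz⟩
        have := volume_toSet_pos (p := p) hQadm
        rw [h0, measure_empty] at this
        exact absurd this (lt_irrefl 0)
      calc ENNReal.ofReal c * volume (R.toSet p)
          ≤ ∑ k, volume ((P k).toSet p) := htot
        _ = ∑ k, ∑ Q ∈ pieces p d (M - mf k) (P k), volume (Q.toSet p) := by
            refine Finset.sum_congr rfl fun k _ => ?_
            rw [volume_pieces hp hd _ (P k) (hPadm k)]
        _ = ∑ Q ∈ Finset.univ.biUnion (fun k => pieces p d (M - mf k) (P k)),
              volume (Q.toSet p) := (Finset.sum_biUnion hdisjS).symm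
        _ ≤ ∑ Q ∈ G, volume (Q.toSet p) := by
            apply Finset.sum_le_sum_of_subset
            intro Q hQ
            rw [Finset.mem_biUnion] at hQ
            obtain ⟨k, -, hQk⟩ := hQ
            exact hSk k hQk
    -- the bad pieces have total volume at most (1-c)|R|
    have hbad : ∑ Q ∈ pieces p d M R \ G, volume (Q.toSet p)
        ≤ ENNReal.ofReal (1 - c) * volume (R.toSet p) := by
      have hall := Finset.sum_sdiff (f := fun Q => volume (Q.toSet p))
        (Finset.filter_subset (fun Q => ∃ k, Q ∈ pieces p d (M - mf k) (P k)) (pieces p d M R))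
      rw [volume_pieces hp hd M R hR] at hall
      have hsplit : ENNReal.ofReal (1 - c) * volume (R.toSet p)
          + ENNReal.ofReal c * volume (R.toSet p) = volume (R.toSet p) := by
        rw [← add_mul, ← ENNReal.ofReal_add (by linarith) hc0.le]
        norm_num
      have hle : ∑ Q ∈ pieces p d M R \ G, volume (Q.toSet p)
          + ENNReal.ofReal c * volume (R.toSet p)
          ≤ ENNReal.ofReal (1 - c) * volume (R.toSet p)
          + ENNReal.ofReal c * volume (R.toSet p) := by
        rw [hsplit]
        refine le_trans (add_le_add (le_refl _) hGlarge) (le_of_eq ?_)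
        exact hall
      exact (ENNReal.add_le_add_iff_right
        (ENNReal.mul_ne_top ENNReal.ofReal_ne_top volume_toSet_ne_top)).mp hle
    calc volume (E ∩ R.toSet p)
        ≤ ∑ Q ∈ pieces p d M R \ G, volume (E ∩ Q.toSet p) := by rw [← hsd] at h1; exact h1
      _ ≤ ∑ Q ∈ pieces p d M R \ G, ENNReal.ofReal (1 - c) ^ m * volume (Q.toSet p) := by
          refine Finset.sum_le_sum fun Q hQ => ?_
          exact ih Q (pieces_adm hp hd M R hR Q (Finset.mem_sdiff.mp hQ).1)
      _ = ENNReal.ofReal (1 - c) ^ m * ∑ Q ∈ pieces p d M R \ G, volume (Q.toSet p) := by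
          rw [Finset.mul_sum]
      _ ≤ ENNReal.ofReal (1 - c) ^ m * (ENNReal.ofReal (1 - c) * volume (R.toSet p)) :=
          mul_le_mul_right hbad _
      _ = ENNReal.ofReal (1 - c) ^ (m + 1) * volume (R.toSet p) := by
          rw [pow_succ]; ring

/-- A `(c,δ,θ)`-weakly porous set has Lebesgue measure zero. -/
theorem measure_zero_of_weaklyPorous
    (n : ℕ) (p : ℝ) (hp : 1 < p) (d : ℕ) (hd : 1 ≤ d)
    (E : Set ((Fin n → ℝ) × ℝ)) (hEne : E.Nonempty) (hEcl : IsClosed E)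
    (c δ θ : ℝ) (hc0 : 0 < c) (hc1 : c < 1) (hδ0 : 0 < δ) (hδ1 : δ < 1)
    (hwp : WeaklyPorous n p d E c δ θ) :
    volume E = 0 := by
  classical
  have hnull : ∀ R : PRect n, PRect.Adm R → volume (E ∩ R.toSet p) = 0 := by
    intro R hR
    have hbound := fun m => key_contraction hp hd hc0 hc1 hwp m R hR
    have ha : ENNReal.ofReal (1 - c) < 1 := by
      rw [ENNReal.ofReal_lt_one]
      linarith
    have htend : Tendsto (fun m : ℕ => ENNReal.ofReal (1 - c) ^ m * volume (R.toSet p))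
        atTop (nhds 0) := by
      have h0 : Tendsto (fun m : ℕ => ENNReal.ofReal (1 - c) ^ m) atTop (nhds 0) :=
        ENNReal.tendsto_pow_atTop_nhds_zero_of_lt_one ha
      have := ENNReal.Tendsto.mul_const h0 (Or.inr (PRect.volume_toSet_ne_top (p := p) (R := R)))
      simpa using this
    have hle0 : volume (E ∩ R.toSet p) ≤ 0 :=
      ge_of_tendsto htend (Filter.Eventually.of_forall hbound)
    exact le_zero_iff.mp hle0
  have hcov : ∀ z : (Fin n → ℝ) × ℝ, ∃ m : ℕ,
      z ∈ (PRect.mk (fun _ => 0) (((m:ℝ)+1) ^ p) ((m:ℝ)+1) 0 : PRect n).toSet p ∪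
        (PRect.mk (fun _ => 0) 0 ((m:ℝ)+1) 0 : PRect n).toSet p := by
    intro z
    obtain ⟨m, hm⟩ := exists_nat_gt (max (2 * ‖z.1‖) |z.2|)
    refine ⟨m, ?_⟩
    have hm1 : 2 * ‖z.1‖ < (m:ℝ) + 1 := by
      have := le_max_left (2 * ‖z.1‖) |z.2|
      linarith
    have hm2 : |z.2| < (m:ℝ) + 1 := by
      have := le_max_right (2 * ‖z.1‖) |z.2|
      linarith
    have hL1 : (1:ℝ) ≤ (m:ℝ) + 1 := by
      have : (0:ℝ) ≤ m := Nat.cast_nonneg m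
      linarith
    have hpow : (m:ℝ) + 1 ≤ ((m:ℝ) + 1) ^ p := by
      calc (m:ℝ) + 1 = ((m:ℝ) + 1) ^ (1:ℝ) := (Real.rpow_one _).symm
        _ ≤ ((m:ℝ) + 1) ^ p := Real.rpow_le_rpow_of_exponent_le hL1 hp.le
    have hxi : ∀ i, |z.1 i| < ((m:ℝ) + 1) / 2 := by
      intro i
      have h1 : ‖z.1 i‖ ≤ ‖z.1‖ := norm_le_pi_norm z.1 i
      rw [Real.norm_eq_abs] at h1
      linarith
    have hx : ∀ i, (0:ℝ) - ((m:ℝ)+1) / 2 ≤ z.1 i ∧ z.1 i < (0:ℝ) + ((m:ℝ)+1) / 2 := by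
      intro i
      have := abs_lt.mp (hxi i)
      constructor <;> linarith [this.1, this.2]
    rcases le_or_gt 0 z.2 with hz2 | hz2
    · left
      refine ⟨hx, ?_, ?_⟩
      · simp only
        have hz2' : z.2 ≤ |z.2| := le_abs_self z.2
        linarith
      · simp only
        have hz2' : z.2 ≤ |z.2| := le_abs_self z.2
        have : (0:ℝ) * (((m:ℝ)+1) ^ p) = 0 := zero_mul _
        linarith
    · right
      refine ⟨hx, ?_, ?_⟩
      · simp only
        have : -z.2 = |z.2| := (abs_of_neg hz2).symm
        linarith
      · simp only
        have : (0:ℝ) * (((m:ℝ)+1) ^ p) = 0 := zero_mul _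
        linarith
  have hmono : volume E ≤ volume (⋃ m : ℕ,
      (E ∩ (PRect.mk (fun _ => 0) (((m:ℝ)+1) ^ p) ((m:ℝ)+1) 0 : PRect n).toSet p) ∪
      (E ∩ (PRect.mk (fun _ => 0) 0 ((m:ℝ)+1) 0 : PRect n).toSet p)) := by
    apply measure_mono
    intro z hz
    obtain ⟨m, hm⟩ := hcov z
    refine Set.mem_iUnion.mpr ⟨m, ?_⟩
    rcases hm with h | h
    · exact Or.inl ⟨hz, h⟩
    · exact Or.inr ⟨hz, h⟩
  have hAdm : ∀ m : ℕ, PRect.Adm (PRect.mk (fun _ => 0) (((m:ℝ)+1) ^ p) ((m:ℝ)+1) 0 : PRect n)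
      ∧ PRect.Adm (PRect.mk (fun _ => 0) 0 ((m:ℝ)+1) 0 : PRect n) := by
    intro m
    have h0 : (0:ℝ) < (m:ℝ) + 1 := by positivity
    exact ⟨⟨h0, le_refl 0, by norm_num⟩, ⟨h0, le_refl 0, by norm_num⟩⟩
  have hzero : volume (⋃ m : ℕ,
      (E ∩ (PRect.mk (fun _ => 0) (((m:ℝ)+1) ^ p) ((m:ℝ)+1) 0 : PRect n).toSet p) ∪
      (E ∩ (PRect.mk (fun _ => 0) 0 ((m:ℝ)+1) 0 : PRect n).toSet p)) = 0 := by
    apply measure_iUnion_null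
    intro m
    exact measure_union_null (hnull _ (hAdm m).1) (hnull _ (hAdm m).2)
  rw [hzero] at hmono
  exact le_zero_iff.mp hmono

end
end

section
/- Let E ⊆ ℝ^{n+1} be nonempty and let R(γ) = Q(x₀,L) × [t₀ − L^p, t₀ − γL^p) be a parabolic rectangle with γ ∈ [0,1/2] that is disjoint from E, where p > 1. Then for every 0 < α < 1/(n+p), ∫_{R(γ)} dist_p((x,t),E)^{−α(n+p)} dx dt ≤ C(n,p,α) · |R(γ)|^{1−α}, where |R(γ)| = (1−γ)L^{n+p}. -/
open Real MeasureTheory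
open scoped ENNReal

section AuxLemmas

lemma restrict_pi_box {n : ℕ} (s : Fin n → Set ℝ) :
    (volume : Measure (Fin n → ℝ)).restrict (Set.pi Set.univ s)
      = Measure.pi (fun i => (volume : Measure ℝ).restrict (s i)) := by
  refine (Measure.pi_eq fun t ht => ?_).symm
  rw [Measure.restrict_apply (MeasurableSet.univ_pi ht), ← Set.pi_inter_distrib,
    volume_pi_pi]
  simp_rw [Measure.restrict_apply (ht _)]

lemma lmarginal_eval {n : ℕ} (ν : Fin n → Measure ℝ) [∀ i, SigmaFinite (ν i)]
    (i : Fin n) (g : ℝ → ℝ≥0∞) (hg : Measurable g) (s : Finset (Fin n)) (hi : i ∉ s)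
    (z : Fin n → ℝ) :
    (∫⋯∫⁻_s, (fun x => g (x i)) ∂ν) z = (∏ j ∈ s, ν j Set.univ) * g (z i) := by
  classical
  induction s using Finset.induction generalizing z with
  | empty => simp
  | @insert j s hj ih =>
    have hij : i ≠ j := fun h => hi (h ▸ Finset.mem_insert_self j s)
    have hf : Measurable (fun x : Fin n → ℝ => g (x i)) := hg.comp (measurable_pi_apply i)
    rw [MeasureTheory.lmarginal_insert _ hf hj]
    have his : i ∉ s := fun h => hi (Finset.mem_insert_of_mem h)
    have : ∀ y, (∫⋯∫⁻_s, (fun x => g (x i)) ∂ν) (Function.update z j y)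
        = (∏ j ∈ s, ν j Set.univ) * g (z i) := by
      intro y
      rw [ih his, Function.update_of_ne hij]
    simp_rw [this]
    rw [lintegral_const, Finset.prod_insert hj]
    ring

lemma lintegral_pi_eval {n : ℕ} (ν : Fin n → Measure ℝ) [∀ i, IsFiniteMeasure (ν i)]
    (i : Fin n) (g : ℝ → ℝ≥0∞) (hg : Measurable g) :
    ∫⁻ x, g (x i) ∂(Measure.pi ν)
      = (∏ j ∈ Finset.univ.erase i, ν j Set.univ) * ∫⁻ s, g s ∂(ν i) := by
  classical
  have hf : Measurable (fun x : Fin n → ℝ => g (x i)) := hg.comp (measurable_pi_apply i)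
  rw [MeasureTheory.lintegral_eq_lmarginal_univ (fun _ => 0)]
  rw [← Finset.insert_erase (Finset.mem_univ i),
    MeasureTheory.lmarginal_insert _ hf (Finset.notMem_erase i _)]
  have : ∀ y, (∫⋯∫⁻_Finset.univ.erase i, (fun x => g (x i)) ∂ν) (Function.update (fun _ => 0) i y)
      = (∏ j ∈ Finset.univ.erase i, ν j Set.univ) * g y := by
    intro y
    rw [lmarginal_eval ν i g hg _ (Finset.notMem_erase i _), Function.update_self]
  simp_rw [this]
  rw [lintegral_const_mul' _ _ (ENNReal.prod_ne_top (fun j _ => measure_ne_top _ _)),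
    Finset.erase_insert (Finset.notMem_erase i _)]

lemma oneD_left {β : ℝ} (hβ1 : β < 1) (a ℓ : ℝ) (hℓ : 0 ≤ ℓ) :
    ∫⁻ s in Set.Ico a (a + ℓ), ENNReal.ofReal ((s - a) ^ (-β))
      ≤ ENNReal.ofReal (ℓ ^ (1 - β) / (1 - β)) := by
  have hab : a ≤ a + ℓ := by linarith
  rw [Measure.restrict_congr_set Ico_ae_eq_Ioc]
  have hii : IntervalIntegrable (fun s : ℝ => (s - a) ^ (-β)) volume a (a + ℓ) := by
    have := (intervalIntegral.intervalIntegrable_rpow' (a := 0) (b := ℓ)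
      (r := -β) (by linarith)).comp_sub_right a
    simpa [add_comm] using this
  have hint : IntegrableOn (fun s : ℝ => (s - a) ^ (-β)) (Set.Ioc a (a + ℓ)) volume := by
    rw [intervalIntegrable_iff, Set.uIoc_of_le hab] at hii
    exact hii
  have hnn : 0 ≤ᶠ[ae (volume.restrict (Set.Ioc a (a+ℓ)))] fun s : ℝ => (s - a) ^ (-β) := by
    filter_upwards [ae_restrict_mem measurableSet_Ioc] with s hs
    exact Real.rpow_nonneg (by linarith [hs.1]) _
  rw [← ofReal_integral_eq_lintegral_ofReal hint hnn]
  have hval : ∫ s in Set.Ioc a (a + ℓ), (s - a) ^ (-β) = ℓ ^ (1 - β) / (1 - β) := by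
    rw [← intervalIntegral.integral_of_le hab]
    rw [show (fun s : ℝ => (s - a) ^ (-β))
      = (fun s : ℝ => ((fun u : ℝ => u ^ (-β)) (s - a))) from rfl]
    rw [intervalIntegral.integral_comp_sub_right (fun u : ℝ => u ^ (-β)) a]
    simp only [sub_self, add_sub_cancel_left]
    rw [integral_rpow (Or.inl (by linarith))]
    rw [Real.zero_rpow (by linarith), show -β + 1 = 1 - β from by ring]
    norm_num
  rw [hval]

lemma oneD_right {β : ℝ} (hβ1 : β < 1) (a ℓ : ℝ) (hℓ : 0 ≤ ℓ) :
    ∫⁻ s in Set.Ico a (a + ℓ), ENNReal.ofReal ((a + ℓ - s) ^ (-β))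
      ≤ ENNReal.ofReal (ℓ ^ (1 - β) / (1 - β)) := by
  have hab : a ≤ a + ℓ := by linarith
  rw [Measure.restrict_congr_set Ico_ae_eq_Ioc]
  have hii : IntervalIntegrable (fun s : ℝ => (a + ℓ - s) ^ (-β)) volume a (a + ℓ) := by
    have := (intervalIntegral.intervalIntegrable_rpow' (a := 0) (b := ℓ)
      (r := -β) (by linarith)).comp_sub_left (a + ℓ)
    have h2 : a + ℓ - 0 = a + ℓ := by ring
    have h3 : a + ℓ - ℓ = a := by ring
    rw [h2, h3] at this
    exact this.symm
  have hint : IntegrableOn (fun s : ℝ => (a + ℓ - s) ^ (-β)) (Set.Ioc a (a + ℓ)) volume := by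
    rw [intervalIntegrable_iff, Set.uIoc_of_le hab] at hii
    exact hii
  have hnn : 0 ≤ᶠ[ae (volume.restrict (Set.Ioc a (a+ℓ)))] fun s : ℝ => (a + ℓ - s) ^ (-β) := by
    filter_upwards [ae_restrict_mem measurableSet_Ioc] with s hs
    exact Real.rpow_nonneg (by linarith [hs.2]) _
  rw [← ofReal_integral_eq_lintegral_ofReal hint hnn]
  have hval : ∫ s in Set.Ioc a (a + ℓ), (a + ℓ - s) ^ (-β) = ℓ ^ (1 - β) / (1 - β) := by
    rw [← intervalIntegral.integral_of_le hab]
    rw [show (fun s : ℝ => (a + ℓ - s) ^ (-β))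
      = (fun s : ℝ => ((fun u : ℝ => u ^ (-β)) (a + ℓ - s))) from rfl]
    rw [intervalIntegral.integral_comp_sub_left (fun u : ℝ => u ^ (-β)) (a + ℓ)]
    have h2 : a + ℓ - (a + ℓ) = 0 := by ring
    have h3 : a + ℓ - a = ℓ := by ring
    rw [h2, h3]
    rw [integral_rpow (Or.inl (by linarith))]
    rw [Real.zero_rpow (by linarith), show -β + 1 = 1 - β from by ring]
    norm_num
  rw [hval]

lemma lintegral_box_fst {n : ℕ} (S : Set (Fin n → ℝ)) (I : Set ℝ)
    (g : (Fin n → ℝ) → ℝ≥0∞) (hg : Measurable g) (hI : volume I ≠ ⊤) :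
    ∫⁻ z in S ×ˢ I, g z.1 = (∫⁻ x in S, g x) * volume I := by
  rw [Measure.volume_eq_prod, ← Measure.prod_restrict,
    lintegral_prod (fun z => g z.1) (hg.comp measurable_fst).aemeasurable]
  simp_rw [lintegral_const, Measure.restrict_apply_univ]
  rw [lintegral_mul_const' _ _ hI]

lemma lintegral_box_snd {n : ℕ} (S : Set (Fin n → ℝ)) (I : Set ℝ)
    (g : ℝ → ℝ≥0∞) (hg : Measurable g) :
    ∫⁻ z in S ×ˢ I, g z.2 = volume S * ∫⁻ t in I, g t := by
  rw [Measure.volume_eq_prod, ← Measure.prod_restrict,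
    lintegral_prod (fun z => g z.2) (hg.comp measurable_snd).aemeasurable]
  simp_rw [lintegral_const, Measure.restrict_apply_univ, mul_comm]

/-- The `2n+2` one-sided distance functions to the faces of the parabolic box. -/
noncomputable def qf {n : ℕ} (p : ℝ) (x₀ : Fin n → ℝ) (t₀ L γ : ℝ) (z : (Fin n → ℝ) × ℝ) :
    (Fin n ⊕ Fin n) ⊕ Bool → ℝ
  | .inl (.inl i) => z.1 i - (x₀ i - L / 2)
  | .inl (.inr i) => (x₀ i + L / 2) - z.1 i
  | .inr true => (z.2 - (t₀ - L ^ p)) ^ (1 / p)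
  | .inr false => (t₀ - γ * L ^ p - z.2) ^ (1 / p)

lemma qf_measurable {n : ℕ} (p : ℝ) (x₀ : Fin n → ℝ) (t₀ L γ : ℝ)
    (k : (Fin n ⊕ Fin n) ⊕ Bool) :
    Measurable (fun z : (Fin n → ℝ) × ℝ => qf p x₀ t₀ L γ z k) := by
  rcases k with (i | i) | (_ | _)
  · exact ((measurable_pi_apply i).comp measurable_fst).sub measurable_const
  · exact measurable_const.sub ((measurable_pi_apply i).comp measurable_fst)
  · exact (measurable_const.sub measurable_snd).pow_const _
  · exact (measurable_snd.sub measurable_const).pow_const _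

lemma hyperplane_null {n : ℕ} (i : Fin n) (c : ℝ) :
    volume {x : Fin n → ℝ | x i = c} = 0 := by
  classical
  have hset : {x : Fin n → ℝ | x i = c}
      = Set.pi Set.univ (fun j => if j = i then {c} else Set.univ) := by
    ext x
    simp only [Set.mem_setOf_eq, Set.mem_pi, Set.mem_univ, true_implies]
    constructor
    · intro h j
      by_cases hj : j = i
      · subst hj; simp [h]
      · simp [hj]
    · intro h
      have := h i
      simpa using this
  rw [hset, volume_pi_pi]
  refine Finset.prod_eq_zero (Finset.mem_univ i) ?_
  simp

end AuxLemmas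

/-- Annular estimate: there is a constant `C = C(n,p,α) > 0` such that for every
nonempty set `E` and every `E`-free parabolic rectangle
`R(γ) = Q(x₀,L) × [t₀ − L^p, t₀ − γL^p)` with `γ ∈ [0,1/2]`,
`∫_{R(γ)} dist_p((x,t),E)^{−α(n+p)} ≤ C·|R(γ)|^{1−α}`,
where `|R(γ)| = (1−γ)L^{n+p}`. -/
theorem annular_integral_estimate (n : ℕ) (p : ℝ) (hp : 1 < p)
    (α : ℝ) (hα0 : 0 < α) (hα : α < 1 / ((n : ℝ) + p))
    (dp : ((Fin n → ℝ) × ℝ) → ((Fin n → ℝ) × ℝ) → ℝ)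
    (hdp : ∀ a b, dp a b = max (‖a.1 - b.1‖) (|a.2 - b.2| ^ (1 / p))) :
    ∃ C > 0, ∀ (E : Set ((Fin n → ℝ) × ℝ)), E.Nonempty →
      ∀ (x₀ : Fin n → ℝ) (t₀ L γ : ℝ), 0 < L → 0 ≤ γ → γ ≤ 1 / 2 →
      ∀ R : Set ((Fin n → ℝ) × ℝ),
        R = {z | (∀ i, x₀ i - L / 2 ≤ z.1 i ∧ z.1 i < x₀ i + L / 2) ∧
          t₀ - L ^ p ≤ z.2 ∧ z.2 < t₀ - γ * L ^ p} →
        R ∩ E = ∅ →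
        ∫⁻ z in R, ENNReal.ofReal ((sInf (dp z '' E)) ^ (-(α * ((n : ℝ) + p)))) ≤
          ENNReal.ofReal (C * ((1 - γ) * L ^ ((n : ℝ) + p)) ^ (1 - α)) := by
  classical
  have hp0 : (0 : ℝ) < p := by linarith
  set np : ℝ := (n : ℝ) + p with hnp_def
  have hnp1 : 1 < np := by
    have : (0 : ℝ) ≤ (n : ℝ) := Nat.cast_nonneg n
    simp only [hnp_def]; linarith
  have hnp0 : 0 < np := by linarith
  set β : ℝ := α * np with hβ_def
  have hβ0 : 0 < β := mul_pos hα0 hnp0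
  have hβ1 : β < 1 := by
    have := (lt_div_iff₀ hnp0).mp hα
    simpa [hβ_def] using this
  have hβp1 : β / p < 1 := (div_lt_one hp0).mpr (by linarith)
  have hβp0 : 0 < β / p := div_pos hβ0 hp0
  have hα1 : α < 1 := lt_trans hα (by rw [div_lt_one hnp0]; exact hnp1)
  set K : ℝ := 2 / (1 - β) + 2 / (1 - β / p) with hK_def
  have hd1 : (0:ℝ) < 2 / (1 - β) := div_pos two_pos (by linarith)
  have hd2 : (0:ℝ) < 2 / (1 - β / p) := div_pos two_pos (by linarith)
  have hK1 : 2 / (1 - β) ≤ K := by simp only [hK_def]; linarith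
  have hK2 : 2 / (1 - β / p) ≤ K := by simp only [hK_def]; linarith
  have hKpos : 0 < K := by simp only [hK_def]; linarith
  refine ⟨((n + n + 2 : ℕ) : ℝ) * K, by positivity, ?_⟩
  intro E hE x₀ t₀ L γ hL hγ0 hγhalf R hR hRE
  set M : ℝ := ((1 - γ) * L ^ np) ^ (1 - α) with hM_def
  have hγ1 : (1 : ℝ) / 2 ≤ 1 - γ := by linarith
  have hγ1' : 1 - γ ≤ 1 := by linarith
  have hγpos : 0 < 1 - γ := by linarith
  have hMpos : 0 < M := by
    apply Real.rpow_pos_of_pos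
    exact mul_pos hγpos (Real.rpow_pos_of_pos hL _)
  -- key quantities
  set X : ℝ := L ^ (np - β) with hX_def
  have hXpos : 0 < X := Real.rpow_pos_of_pos hL _
  have hM_eq : M = (1 - γ) ^ (1 - α) * X := by
    rw [hM_def, Real.mul_rpow hγpos.le (Real.rpow_nonneg hL.le _),
      ← Real.rpow_mul hL.le]
    congr 2
    simp only [hβ_def]; ring
  have h_half : (1 : ℝ) / 2 ≤ (1 - γ) ^ (1 - α) := by
    calc (1:ℝ)/2 = (1/2 : ℝ) ^ (1:ℝ) := (Real.rpow_one _).symm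
    _ ≤ (1/2 : ℝ) ^ (1 - α) := Real.rpow_le_rpow_of_exponent_ge (by norm_num) (by norm_num)
        (by linarith)
    _ ≤ (1 - γ) ^ (1 - α) := Real.rpow_le_rpow (by norm_num) hγ1 (by linarith)
  -- geometry
  set S : Set (Fin n → ℝ) :=
    Set.pi Set.univ (fun i => Set.Ico (x₀ i - L / 2) (x₀ i + L / 2)) with hS_def
  set I : Set ℝ := Set.Ico (t₀ - L ^ p) (t₀ - γ * L ^ p) with hI_def
  set ℓ : ℝ := (1 - γ) * L ^ p with hℓ_def
  have hℓpos : 0 < ℓ := mul_pos hγpos (Real.rpow_pos_of_pos hL _)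
  have hd_eq : t₀ - γ * L ^ p = (t₀ - L ^ p) + ℓ := by simp only [hℓ_def]; ring
  have hRSI : R = S ×ˢ I := by
    rw [hR]
    ext z
    simp only [Set.mem_setOf_eq, Set.mem_prod, hS_def, hI_def, Set.mem_pi, Set.mem_univ,
      true_implies, Set.mem_Ico]
  have hSmeas : MeasurableSet S :=
    MeasurableSet.univ_pi fun i => measurableSet_Ico
  have hRmeas : MeasurableSet R := by
    rw [hRSI]; exact hSmeas.prod measurableSet_Ico
  have hvolI : volume I = ENNReal.ofReal ℓ := by
    rw [hI_def, Real.volume_Ico]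
    congr 1
    simp only [hℓ_def]; ring
  have hvolS : volume S = ENNReal.ofReal (L ^ (n : ℕ)) := by
    rw [hS_def, volume_pi_pi]
    simp only [Real.volume_Ico]
    have : ∀ x : Fin n, ENNReal.ofReal (x₀ x + L / 2 - (x₀ x - L / 2)) = ENNReal.ofReal L := by
      intro x; congr 1; ring
    simp_rw [this]
    rw [Finset.prod_const, ← ENNReal.ofReal_pow hL.le]
    simp
  -- Step 1 : pointwise a.e. comparison with the sum of one-sided distances
  have hmono : ∫⁻ z in R, ENNReal.ofReal ((sInf (dp z '' E)) ^ (-β))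
      ≤ ∫⁻ z in R, ∑ k : (Fin n ⊕ Fin n) ⊕ Bool,
          ENNReal.ofReal (qf p x₀ t₀ L γ z k ^ (-β)) := by
    set N : Set ((Fin n → ℝ) × ℝ) :=
      (⋃ i, {z : (Fin n → ℝ) × ℝ | z.1 i = x₀ i - L / 2})
        ∪ {z : (Fin n → ℝ) × ℝ | z.2 = t₀ - L ^ p} with hN_def
    have hNnull : volume N = 0 := by
      rw [hN_def]
      apply measure_union_null
      · apply measure_iUnion_null
        intro i
        have hset : {z : (Fin n → ℝ) × ℝ | z.1 i = x₀ i - L / 2}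
            = {x : Fin n → ℝ | x i = x₀ i - L / 2} ×ˢ Set.univ := by
          ext z; simp [Set.mem_prod]
        rw [hset, Measure.volume_eq_prod, Measure.prod_prod, hyperplane_null]
        exact zero_mul _
      · have hset : {z : (Fin n → ℝ) × ℝ | z.2 = t₀ - L ^ p}
            = (Set.univ : Set (Fin n → ℝ)) ×ˢ ({t₀ - L ^ p} : Set ℝ) := by
          ext z
          simp only [Set.mem_setOf_eq, Set.mem_prod, Set.mem_univ, true_and, Set.mem_singleton_iff]
        rw [hset, Measure.volume_eq_prod, Measure.prod_prod, Real.volume_singleton]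
        exact mul_zero _
    have hae : ∀ᵐ z ∂(volume : Measure ((Fin n → ℝ) × ℝ)), z ∉ N := by
      rw [ae_iff]
      simpa using hNnull
    apply lintegral_mono_ae
    filter_upwards [ae_restrict_mem hRmeas, ae_restrict_of_ae hae] with z hzR hzN
    obtain ⟨hz1, hz2, hz3⟩ :
        (∀ i, x₀ i - L / 2 ≤ z.1 i ∧ z.1 i < x₀ i + L / 2) ∧
          t₀ - L ^ p ≤ z.2 ∧ z.2 < t₀ - γ * L ^ p := by
      rw [hR] at hzR; exact hzR
    have hzN1 : ∀ i, z.1 i ≠ x₀ i - L / 2 := by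
      intro i h
      exact hzN (Set.mem_union_left _ (Set.mem_iUnion.mpr ⟨i, h⟩))
    have hzN2 : z.2 ≠ t₀ - L ^ p := fun h => hzN (Set.mem_union_right _ h)
    have hne : (Finset.univ : Finset ((Fin n ⊕ Fin n) ⊕ Bool)).Nonempty :=
      ⟨Sum.inr true, Finset.mem_univ _⟩
    set m : ℝ := Finset.univ.inf' hne (qf p x₀ t₀ L γ z) with hm_def
    have hm_le : ∀ k, m ≤ qf p x₀ t₀ L γ z k :=
      fun k => Finset.inf'_le _ (Finset.mem_univ k)
    have hm_pos : 0 < m := by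
      rw [hm_def, Finset.lt_inf'_iff]
      rintro ((i | i) | (_ | _)) -
      · show (0:ℝ) < z.1 i - (x₀ i - L / 2)
        have h1 := (hz1 i).1
        have h2 := hzN1 i
        rw [sub_pos]
        exact lt_of_le_of_ne h1 (Ne.symm h2)
      · show (0:ℝ) < (x₀ i + L / 2) - z.1 i
        have := (hz1 i).2
        linarith
      · show (0:ℝ) < (t₀ - γ * L ^ p - z.2) ^ (1 / p)
        exact Real.rpow_pos_of_pos (by linarith) _
      · show (0:ℝ) < (z.2 - (t₀ - L ^ p)) ^ (1 / p)
        have : t₀ - L ^ p < z.2 := lt_of_le_of_ne hz2 (Ne.symm hzN2)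
        exact Real.rpow_pos_of_pos (by linarith) _
    have hmD : m ≤ sInf (dp z '' E) := by
      apply le_csInf (hE.image _)
      rintro y ⟨e, heE, rfl⟩
      have heR : e ∉ R := fun h => (Set.eq_empty_iff_forall_notMem.mp hRE e) ⟨h, heE⟩
      rw [hR] at heR
      have hcase : (∃ i, e.1 i < x₀ i - L / 2 ∨ x₀ i + L / 2 ≤ e.1 i) ∨
          (e.2 < t₀ - L ^ p ∨ t₀ - γ * L ^ p ≤ e.2) := by
        by_contra hcon
        push_neg at hcon
        exact heR ⟨fun i => ⟨(hcon.1 i).1, (hcon.1 i).2⟩, hcon.2.1, hcon.2.2⟩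
      rw [hdp]
      rcases hcase with ⟨i, hi | hi⟩ | (ht | ht)
      · calc m ≤ qf p x₀ t₀ L γ z (.inl (.inl i)) := hm_le _
          _ = z.1 i - (x₀ i - L / 2) := rfl
          _ ≤ z.1 i - e.1 i := by linarith
          _ ≤ |z.1 i - e.1 i| := le_abs_self _
          _ = ‖(z.1 - e.1) i‖ := by rw [Pi.sub_apply, Real.norm_eq_abs]
          _ ≤ ‖z.1 - e.1‖ := norm_le_pi_norm _ i
          _ ≤ max (‖z.1 - e.1‖) (|z.2 - e.2| ^ (1 / p)) := le_max_left _ _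
      · calc m ≤ qf p x₀ t₀ L γ z (.inl (.inr i)) := hm_le _
          _ = (x₀ i + L / 2) - z.1 i := rfl
          _ ≤ e.1 i - z.1 i := by linarith
          _ ≤ |e.1 i - z.1 i| := le_abs_self _
          _ = |z.1 i - e.1 i| := abs_sub_comm _ _
          _ = ‖(z.1 - e.1) i‖ := by rw [Pi.sub_apply, Real.norm_eq_abs]
          _ ≤ ‖z.1 - e.1‖ := norm_le_pi_norm _ i
          _ ≤ max (‖z.1 - e.1‖) (|z.2 - e.2| ^ (1 / p)) := le_max_left _ _
      · calc m ≤ qf p x₀ t₀ L γ z (.inr true) := hm_le _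
          _ = (z.2 - (t₀ - L ^ p)) ^ (1 / p) := rfl
          _ ≤ |z.2 - e.2| ^ (1 / p) := by
              apply Real.rpow_le_rpow (by linarith) ?_ (by positivity)
              exact le_trans (by linarith) (le_abs_self (z.2 - e.2))
          _ ≤ max (‖z.1 - e.1‖) (|z.2 - e.2| ^ (1 / p)) := le_max_right _ _
      · calc m ≤ qf p x₀ t₀ L γ z (.inr false) := hm_le _
          _ = (t₀ - γ * L ^ p - z.2) ^ (1 / p) := rfl
          _ ≤ |z.2 - e.2| ^ (1 / p) := by
              apply Real.rpow_le_rpow (by linarith) ?_ (by positivity)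
              rw [abs_sub_comm]
              exact le_trans (by linarith) (le_abs_self (e.2 - z.2))
          _ ≤ max (‖z.1 - e.1‖) (|z.2 - e.2| ^ (1 / p)) := le_max_right _ _
    obtain ⟨k0, -, hk0⟩ := Finset.exists_mem_eq_inf' hne (qf p x₀ t₀ L γ z)
    calc ENNReal.ofReal ((sInf (dp z '' E)) ^ (-β))
        ≤ ENNReal.ofReal (m ^ (-β)) := by
          apply ENNReal.ofReal_le_ofReal
          exact Real.rpow_le_rpow_of_nonpos hm_pos hmD (by linarith)
      _ = ENNReal.ofReal (qf p x₀ t₀ L γ z k0 ^ (-β)) := by rw [hm_def, hk0]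
      _ ≤ ∑ k : (Fin n ⊕ Fin n) ⊕ Bool, ENNReal.ofReal (qf p x₀ t₀ L γ z k ^ (-β)) :=
          Finset.single_le_sum
            (f := fun k => ENNReal.ofReal (qf p x₀ t₀ L γ z k ^ (-β)))
            (fun k _ => zero_le) (Finset.mem_univ k0)
  -- Step 2 : estimate each of the `2n+2` integrals
  haveI hfin : ∀ j : Fin n, IsFiniteMeasure
      ((volume : Measure ℝ).restrict (Set.Ico (x₀ j - L / 2) (x₀ j + L / 2))) := by
    intro j
    constructor
    rw [Measure.restrict_apply_univ, Real.volume_Ico]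
    exact ENNReal.ofReal_lt_top
  have hprod_erase : ∀ i : Fin n,
      (∏ j ∈ Finset.univ.erase i,
        ((volume : Measure ℝ).restrict (Set.Ico (x₀ j - L / 2) (x₀ j + L / 2))) Set.univ)
      = ENNReal.ofReal (L ^ (n - 1 : ℕ)) := by
    intro i
    have hv : ∀ j : Fin n,
        ((volume : Measure ℝ).restrict (Set.Ico (x₀ j - L / 2) (x₀ j + L / 2))) Set.univ
          = ENNReal.ofReal L := by
      intro j
      rw [Measure.restrict_apply_univ, Real.volume_Ico]
      congr 1; ring
    rw [Finset.prod_congr rfl (fun j _ => hv j), Finset.prod_const,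
      Finset.card_erase_of_mem (Finset.mem_univ i), Finset.card_univ, Fintype.card_fin,
      ENNReal.ofReal_pow hL.le]
  have hspace : ∀ (i : Fin n) (g : ℝ → ℝ≥0∞), Measurable g →
      ∫⁻ x in S, g (x i)
        = ENNReal.ofReal (L ^ (n - 1 : ℕ))
            * ∫⁻ s in Set.Ico (x₀ i - L / 2) (x₀ i + L / 2), g s := by
    intro i g hg
    rw [hS_def, restrict_pi_box, lintegral_pi_eval _ i g hg, hprod_erase i]
  -- common real-number facts
  have h1β : (0:ℝ) < 1 - β := by linarith
  have h1βp : (0:ℝ) < 1 - β / p := by linarith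
  have hKt1 : 1 / (1 - β) ≤ K * ((1 - γ) ^ (1 - α)) := by
    calc 1 / (1 - β) = (2 / (1 - β)) * (1 / 2) := by ring
      _ ≤ K * ((1 - γ) ^ (1 - α)) := mul_le_mul hK1 h_half (by norm_num) hKpos.le
  have hKt2 : 1 / (1 - β / p) ≤ K * ((1 - γ) ^ (1 - α)) := by
    calc 1 / (1 - β / p) = (2 / (1 - β / p)) * (1 / 2) := by ring
      _ ≤ K * ((1 - γ) ^ (1 - α)) := mul_le_mul hK2 h_half (by norm_num) hKpos.le
  -- the spatial real bound
  have hreal_space : ∀ i : Fin n,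
      L ^ (n - 1 : ℕ) * (L ^ (1 - β) / (1 - β)) * ℓ ≤ K * M := by
    intro i
    have hn1 : 1 ≤ n := i.pos
    have hcast : ((n - 1 : ℕ) : ℝ) = (n : ℝ) - 1 := by
      rw [Nat.cast_sub hn1, Nat.cast_one]
    have e1 : L ^ (n - 1 : ℕ) * L ^ (1 - β) * L ^ p = X := by
      rw [← Real.rpow_natCast L (n - 1), hcast, ← Real.rpow_add hL, ← Real.rpow_add hL,
        hX_def]
      congr 1
      simp only [hnp_def]; ring
    have h6 : (1 - γ) / (1 - β) ≤ 1 / (1 - β) :=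
      (div_le_div_iff_of_pos_right h1β).mpr hγ1'
    calc L ^ (n - 1 : ℕ) * (L ^ (1 - β) / (1 - β)) * ℓ
        = (L ^ (n - 1 : ℕ) * L ^ (1 - β) * L ^ p) * ((1 - γ) / (1 - β)) := by
          rw [hℓ_def]; ring
      _ = X * ((1 - γ) / (1 - β)) := by rw [e1]
      _ ≤ X * (K * ((1 - γ) ^ (1 - α))) :=
          mul_le_mul_of_nonneg_left (le_trans h6 hKt1) hXpos.le
      _ = K * M := by rw [hM_eq]; ring
  -- the time real bound
  have hreal_time : L ^ (n : ℕ) * (ℓ ^ (1 - β / p) / (1 - β / p)) ≤ K * M := by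
    have hexp : p * (1 - β / p) = p - β := by field_simp
    have e3 : L ^ ((n:ℝ)) * L ^ (p * (1 - β / p)) = X := by
      rw [← Real.rpow_add hL, hX_def]
      congr 1
      rw [hexp]
      simp only [hnp_def]; ring
    have e2 : L ^ (n : ℕ) * ℓ ^ (1 - β / p) = (1 - γ) ^ (1 - β / p) * X := by
      rw [hℓ_def, Real.mul_rpow hγpos.le (Real.rpow_nonneg hL.le _),
        ← Real.rpow_mul hL.le, ← Real.rpow_natCast L n, ← e3]
      ring
    have h7 : (1 - γ) ^ (1 - β / p) ≤ 1 :=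
      Real.rpow_le_one hγpos.le hγ1' (by linarith)
    calc L ^ (n : ℕ) * (ℓ ^ (1 - β / p) / (1 - β / p))
        = (L ^ (n : ℕ) * ℓ ^ (1 - β / p)) * (1 / (1 - β / p)) := by ring
      _ = ((1 - γ) ^ (1 - β / p) * X) * (1 / (1 - β / p)) := by rw [e2]
      _ ≤ (1 * X) * (1 / (1 - β / p)) := by
          apply mul_le_mul_of_nonneg_right
            (mul_le_mul_of_nonneg_right h7 hXpos.le)
            (le_of_lt (by positivity))
      _ = X * (1 / (1 - β / p)) := by ring
      _ ≤ X * (K * ((1 - γ) ^ (1 - α))) := mul_le_mul_of_nonneg_left hKt2 hXpos.le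
      _ = K * M := by rw [hM_eq]; ring
  have key : ∀ k : (Fin n ⊕ Fin n) ⊕ Bool,
      ∫⁻ z in S ×ˢ I, ENNReal.ofReal (qf p x₀ t₀ L γ z k ^ (-β))
        ≤ ENNReal.ofReal (K * M) := by
    rintro ((i | i) | (_ | _))
    · -- left spatial face
      have hmg : Measurable (fun s : ℝ => ENNReal.ofReal ((s - (x₀ i - L / 2)) ^ (-β))) :=
        ((measurable_id.sub measurable_const).pow_const _).ennreal_ofReal
      show ∫⁻ z in S ×ˢ I, ENNReal.ofReal ((z.1 i - (x₀ i - L / 2)) ^ (-β)) ≤ _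
      rw [lintegral_box_fst S I (fun x => ENNReal.ofReal ((x i - (x₀ i - L / 2)) ^ (-β)))
        (((measurable_pi_apply i).sub measurable_const).pow_const _).ennreal_ofReal
        (by rw [hvolI]; exact ENNReal.ofReal_ne_top), hspace i _ hmg, hvolI]
      have h1d : ∫⁻ s in Set.Ico (x₀ i - L / 2) (x₀ i + L / 2),
          ENNReal.ofReal ((s - (x₀ i - L / 2)) ^ (-β))
            ≤ ENNReal.ofReal (L ^ (1 - β) / (1 - β)) := by
        rw [show x₀ i + L / 2 = (x₀ i - L / 2) + L from by ring]
        exact oneD_left hβ1 _ L hL.le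
      calc ENNReal.ofReal (L ^ (n - 1 : ℕ))
            * (∫⁻ s in Set.Ico (x₀ i - L / 2) (x₀ i + L / 2),
                ENNReal.ofReal ((s - (x₀ i - L / 2)) ^ (-β)))
            * ENNReal.ofReal ℓ
          ≤ ENNReal.ofReal (L ^ (n - 1 : ℕ)) * ENNReal.ofReal (L ^ (1 - β) / (1 - β))
              * ENNReal.ofReal ℓ := mul_le_mul' (mul_le_mul' le_rfl h1d) le_rfl
        _ = ENNReal.ofReal (L ^ (n - 1 : ℕ) * (L ^ (1 - β) / (1 - β)) * ℓ) := by
            rw [← ENNReal.ofReal_mul (by positivity), ← ENNReal.ofReal_mul (by positivity)]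
        _ ≤ ENNReal.ofReal (K * M) := ENNReal.ofReal_le_ofReal (hreal_space i)
    · -- right spatial face
      have hmg : Measurable (fun s : ℝ => ENNReal.ofReal ((x₀ i + L / 2 - s) ^ (-β))) :=
        ((measurable_const.sub measurable_id).pow_const _).ennreal_ofReal
      show ∫⁻ z in S ×ˢ I, ENNReal.ofReal ((x₀ i + L / 2 - z.1 i) ^ (-β)) ≤ _
      rw [lintegral_box_fst S I (fun x => ENNReal.ofReal ((x₀ i + L / 2 - x i) ^ (-β)))
        ((measurable_const.sub (measurable_pi_apply i)).pow_const _).ennreal_ofReal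
        (by rw [hvolI]; exact ENNReal.ofReal_ne_top), hspace i _ hmg, hvolI]
      have h1d : ∫⁻ s in Set.Ico (x₀ i - L / 2) (x₀ i + L / 2),
          ENNReal.ofReal ((x₀ i + L / 2 - s) ^ (-β))
            ≤ ENNReal.ofReal (L ^ (1 - β) / (1 - β)) := by
        rw [show x₀ i + L / 2 = (x₀ i - L / 2) + L from by ring]
        exact oneD_right hβ1 _ L hL.le
      calc ENNReal.ofReal (L ^ (n - 1 : ℕ))
            * (∫⁻ s in Set.Ico (x₀ i - L / 2) (x₀ i + L / 2),
                ENNReal.ofReal ((x₀ i + L / 2 - s) ^ (-β)))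
            * ENNReal.ofReal ℓ
          ≤ ENNReal.ofReal (L ^ (n - 1 : ℕ)) * ENNReal.ofReal (L ^ (1 - β) / (1 - β))
              * ENNReal.ofReal ℓ := mul_le_mul' (mul_le_mul' le_rfl h1d) le_rfl
        _ = ENNReal.ofReal (L ^ (n - 1 : ℕ) * (L ^ (1 - β) / (1 - β)) * ℓ) := by
            rw [← ENNReal.ofReal_mul (by positivity), ← ENNReal.ofReal_mul (by positivity)]
        _ ≤ ENNReal.ofReal (K * M) := ENNReal.ofReal_le_ofReal (hreal_space i)
    · -- top time face
      have hmg : Measurable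
          (fun t : ℝ => ENNReal.ofReal (((t₀ - γ * L ^ p - t) ^ (1 / p)) ^ (-β))) :=
        (((measurable_const.sub measurable_id).pow_const _).pow_const _).ennreal_ofReal
      show ∫⁻ z in S ×ˢ I, ENNReal.ofReal (((t₀ - γ * L ^ p - z.2) ^ (1 / p)) ^ (-β)) ≤ _
      rw [lintegral_box_snd S I
        (fun t => ENNReal.ofReal (((t₀ - γ * L ^ p - t) ^ (1 / p)) ^ (-β))) hmg, hvolS]
      have hI2 : I = Set.Ico (t₀ - L ^ p) ((t₀ - L ^ p) + ℓ) := by rw [hI_def, ← hd_eq]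
      have hcongr : ∫⁻ t in I, ENNReal.ofReal (((t₀ - γ * L ^ p - t) ^ (1 / p)) ^ (-β))
          = ∫⁻ t in I, ENNReal.ofReal (((t₀ - L ^ p) + ℓ - t) ^ (-(β / p))) := by
        rw [hI2]
        apply MeasureTheory.setLIntegral_congr_fun measurableSet_Ico ?_
        intro t ht
        dsimp only
        congr 1
        rw [show t₀ - γ * L ^ p - t = (t₀ - L ^ p) + ℓ - t from by rw [hd_eq],
          ← Real.rpow_mul (by linarith [ht.2]),
          show 1 / p * (-β) = -(β / p) from by ring]
      rw [hcongr, hI2]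
      have h1d := oneD_right hβp1 (t₀ - L ^ p) ℓ hℓpos.le (β := β / p)
      calc ENNReal.ofReal (L ^ (n : ℕ))
            * ∫⁻ t in Set.Ico (t₀ - L ^ p) ((t₀ - L ^ p) + ℓ),
                ENNReal.ofReal (((t₀ - L ^ p) + ℓ - t) ^ (-(β / p)))
          ≤ ENNReal.ofReal (L ^ (n : ℕ)) * ENNReal.ofReal (ℓ ^ (1 - β / p) / (1 - β / p)) :=
            mul_le_mul' le_rfl h1d
        _ = ENNReal.ofReal (L ^ (n : ℕ) * (ℓ ^ (1 - β / p) / (1 - β / p))) := by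
            rw [← ENNReal.ofReal_mul (by positivity)]
        _ ≤ ENNReal.ofReal (K * M) := ENNReal.ofReal_le_ofReal hreal_time
    · -- bottom time face
      have hmg : Measurable
          (fun t : ℝ => ENNReal.ofReal (((t - (t₀ - L ^ p)) ^ (1 / p)) ^ (-β))) :=
        (((measurable_id.sub measurable_const).pow_const _).pow_const _).ennreal_ofReal
      show ∫⁻ z in S ×ˢ I, ENNReal.ofReal (((z.2 - (t₀ - L ^ p)) ^ (1 / p)) ^ (-β)) ≤ _
      rw [lintegral_box_snd S I
        (fun t => ENNReal.ofReal (((t - (t₀ - L ^ p)) ^ (1 / p)) ^ (-β))) hmg, hvolS]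
      have hI2 : I = Set.Ico (t₀ - L ^ p) ((t₀ - L ^ p) + ℓ) := by rw [hI_def, ← hd_eq]
      have hcongr : ∫⁻ t in I, ENNReal.ofReal (((t - (t₀ - L ^ p)) ^ (1 / p)) ^ (-β))
          = ∫⁻ t in I, ENNReal.ofReal ((t - (t₀ - L ^ p)) ^ (-(β / p))) := by
        rw [hI2]
        apply MeasureTheory.setLIntegral_congr_fun measurableSet_Ico ?_
        intro t ht
        dsimp only
        congr 1
        rw [← Real.rpow_mul (by linarith [ht.1]),
          show 1 / p * (-β) = -(β / p) from by ring]
      rw [hcongr, hI2]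
      have h1d := oneD_left hβp1 (t₀ - L ^ p) ℓ hℓpos.le (β := β / p)
      calc ENNReal.ofReal (L ^ (n : ℕ))
            * ∫⁻ t in Set.Ico (t₀ - L ^ p) ((t₀ - L ^ p) + ℓ),
                ENNReal.ofReal ((t - (t₀ - L ^ p)) ^ (-(β / p)))
          ≤ ENNReal.ofReal (L ^ (n : ℕ)) * ENNReal.ofReal (ℓ ^ (1 - β / p) / (1 - β / p)) :=
            mul_le_mul' le_rfl h1d
        _ = ENNReal.ofReal (L ^ (n : ℕ) * (ℓ ^ (1 - β / p) / (1 - β / p))) := by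
            rw [← ENNReal.ofReal_mul (by positivity)]
        _ ≤ ENNReal.ofReal (K * M) := ENNReal.ofReal_le_ofReal hreal_time
  -- assemble
  calc ∫⁻ z in R, ENNReal.ofReal ((sInf (dp z '' E)) ^ (-β))
      ≤ ∫⁻ z in R, ∑ k : (Fin n ⊕ Fin n) ⊕ Bool,
          ENNReal.ofReal (qf p x₀ t₀ L γ z k ^ (-β)) := hmono
    _ = ∑ k : (Fin n ⊕ Fin n) ⊕ Bool,
          ∫⁻ z in S ×ˢ I, ENNReal.ofReal (qf p x₀ t₀ L γ z k ^ (-β)) := by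
        rw [hRSI]
        exact lintegral_finset_sum' _
          (fun k _ => ((qf_measurable p x₀ t₀ L γ k).pow_const _).ennreal_ofReal.aemeasurable)
    _ ≤ ∑ _k : (Fin n ⊕ Fin n) ⊕ Bool, ENNReal.ofReal (K * M) :=
        Finset.sum_le_sum (fun k _ => key k)
    _ = ((n + n + 2 : ℕ) : ℝ≥0∞) * ENNReal.ofReal (K * M) := by
        rw [Finset.sum_const, Finset.card_univ]
        simp [Fintype.card_sum, nsmul_eq_mul]
    _ = ENNReal.ofReal (((n + n + 2 : ℕ) : ℝ) * (K * M)) := by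
        rw [ENNReal.ofReal_mul (Nat.cast_nonneg _), ENNReal.ofReal_natCast]
    _ = ENNReal.ofReal (((n + n + 2 : ℕ) : ℝ) * K * M) := by rw [mul_assoc]
end
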